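/- Let Δ be a finite root system with weight lattice P. Fix λ, ν ∈ P and M ∈ ℕ. Then there are only finitely many μ ∈ P such that both λ − μ and μ − ν can be written as a sum of roots containing at most M negative roots each. -/

import Mathlib

/-! Positive roots have height at least `1` and negative roots height at least `-C`, where `C`
bounds the heights of the positive roots; so a sum of roots with at most `M` negative roots has
at most `ht (sum) + (C + 1) * M` terms. As `ht (λ - μ) + ht (μ - ν) = ht λ - ht ν`, the multiset
writing `λ - μ` has boundedly many terms, all taken from the finite set `Δ₊ ∪ -Δ₊`, which leaves
finitely many possibilities for `μ`. -/

open Multiset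
open scoped Pointwise

theorem Multiset.finite_setOf_forall_mem_card_le {α : Type*} [DecidableEq α] (D : Finset α)
    (K : ℕ) : {S : Multiset α | (∀ x ∈ S, x ∈ D) ∧ card S ≤ K}.Finite := by
  refine (Set.finite_Iic (K • D.val)).subset fun S ⟨hSD, hSK⟩ => le_iff_count.2 fun x => ?_
  by_cases hx : x ∈ S
  · rw [count_nsmul, count_eq_one_of_mem D.nodup (hSD x hx), mul_one]
    exact (count_le_card x S).trans hSK
  · simp [count_eq_zero_of_notMem hx]

theorem card_le_height_sum_add_mul_card_filter_neg {P : Type*} [AddCommGroup P] [DecidableEq P]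
    {Δpos : Finset P} {ht : P →+ ℤ} (hht : ∀ α ∈ Δpos, 0 < ht α) {C : ℕ}
    (hC : ∀ α ∈ Δpos, ht α ≤ C) {S : Multiset P} (hS : ∀ x ∈ S, x ∈ Δpos ∨ -x ∈ Δpos) :
    (card S : ℤ) ≤ ht S.sum + (C + 1) * card (S.filter fun x => -x ∈ Δpos) := by
  induction S using Multiset.induction_on with
  | empty => simp
  | cons a S ih =>
    rw [forall_mem_cons] at hS
    have hSbound := ih hS.2
    rw [card_cons, sum_cons, _root_.map_add, filter_cons]
    split_ifs with ha
    · have hneg := hC _ ha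
      rw [map_neg] at hneg
      push_cast [card_add, card_singleton]
      linarith
    · have hpos := hht a (hS.1.resolve_right ha)
      push_cast [zero_add]
      linarith

/-- Let `Δ` be a finite root system with weight lattice `P`.  Fix
`λ, ν ∈ P` and `M ∈ ℕ`.  Then there are only finitely many `μ ∈ P` such that both
`λ − μ` and `μ − ν` can be written as a sum of roots containing at most `M` negative
roots each.  ('A sum of roots containing at most `M` negative roots' means a finite
multiset of elements of `Δ = Δ₊ ∪ (−Δ₊)` with the given sum in which the total
multiplicity of negative roots is at most `M`.)  The positive roots have strictly
positive height with respect to an additive height function `ht`. -/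
theorem finitely_many_intermediate_weights
    {P : Type*} [AddCommGroup P] [DecidableEq P]
    -- the positive roots
    (Δpos : Finset P)
    -- the height function, positive on positive roots
    (ht : P →+ ℤ) (hht : ∀ α ∈ Δpos, 0 < ht α)
    (lam nu : P) (M : ℕ) :
    {μ : P |
      (∃ S : Multiset P, (∀ x ∈ S, x ∈ Δpos ∨ -x ∈ Δpos) ∧ Multiset.sum S = lam - μ ∧
        Multiset.card (S.filter fun x => -x ∈ Δpos) ≤ M) ∧
      (∃ T : Multiset P, (∀ x ∈ T, x ∈ Δpos ∨ -x ∈ Δpos) ∧ Multiset.sum T = μ - nu ∧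
        Multiset.card (T.filter fun x => -x ∈ Δpos) ≤ M)}.Finite := by
  obtain ⟨C, hC⟩ : ∃ C : ℕ, ∀ α ∈ Δpos, ht α ≤ C :=
    ⟨Δpos.sup fun α => (ht α).toNat, fun α hα =>
      (Int.self_le_toNat _).trans (Nat.cast_le.2 (Finset.le_sup (f := fun α => (ht α).toNat) hα))⟩
  set K := (ht lam - ht nu + 2 * ((C + 1) * M)).toNat
  refine ((finite_setOf_forall_mem_card_le (Δpos ∪ -Δpos) K).image fun S => lam - S.sum).subset ?_
  rintro μ ⟨⟨S, hS, hSsum, hSM⟩, ⟨T, hT, hTsum, hTM⟩⟩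
  have hSbound := card_le_height_sum_add_mul_card_filter_neg hht hC hS
  have hTbound := card_le_height_sum_add_mul_card_filter_neg hht hC hT
  rw [hSsum, map_sub] at hSbound
  rw [hTsum, map_sub] at hTbound
  have hSM' : ((C : ℤ) + 1) * card (S.filter fun x => -x ∈ Δpos) ≤ (C + 1) * M := by gcongr
  have hTM' : ((C : ℤ) + 1) * card (T.filter fun x => -x ∈ Δpos) ≤ (C + 1) * M := by gcongr
  refine ⟨S, ⟨fun x hx => ?_, ?_⟩, by simp [hSsum]⟩
  · simpa [Finset.mem_neg] using hS x hx
  · omega
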